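/- arXiv:2106.01011 — 4 statements merged into one kernel-verified Lean document; each statement's English description precedes it below -/
import Mathlib

section
/- Let θ, θ₀ ∈ ℝ, let z₀ ∈ ℤ be a minimizer over z ∈ ℤ of |θ₀ + 2πz|, and set φ₀ = θ₀ + 2πz₀. Then −cos θ ≤ (1/2)·sinc(φ₀)·(θ + 2πz₀)² − cos φ₀ − (1/2)·φ₀·sin φ₀. -/
open Real

/-!
Put `a = |φ₀|`, which lies in `[0, π]` by minimality of `z₀`, and `c = sinc a ≥ 0`. The even
function `g x = cos x + c x² / 2` has derivative `x (c - sinc x)`; as `sinc` decreases on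
`[0, π]`, `g` decreases on `[0, a]` and increases on `[a, π]`, while for `|x| ≥ π` we have
`g x ≥ -1 + c π² / 2 = g π`. Hence `g` is minimal at `± a`, and the claim is `g φ₀ ≤ g (θ + 2π z₀)`
rewritten with `cos θ = cos (θ + 2π z₀)` and `c φ₀² = φ₀ sin φ₀`.
-/

noncomputable def sinc (x : ℝ) : ℝ := if x = 0 then 1 else Real.sin x / x

open Set

theorem sinc_eq_real_sinc : _root_.sinc = Real.sinc := rfl

namespace Real

theorem mul_sinc (x : ℝ) : x * sinc x = sin x := by
  rcases eq_or_ne x 0 with rfl | hx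
  · simp
  · rw [sinc_of_ne_zero hx, mul_div_cancel₀ _ hx]

theorem sinc_abs (x : ℝ) : sinc |x| = sinc x := by
  rcases abs_choice x with h | h <;> rw [h]
  exact sinc_neg x

/-- For `x > 0`, `sinc x` is the slope of the secant of the concave function `sin` through `0`. -/
theorem sinc_antitoneOn : AntitoneOn sinc (Icc 0 π) := by
  have hslope : AntitoneOn (slope sin 0) {y ∈ Icc 0 π | 0 < y} :=
    strictConcaveOn_sin_Icc.concaveOn.antitoneOn_slope_gt ⟨le_rfl, pi_pos.le⟩
  have hsinc : ∀ y, 0 < y → sinc y = slope sin 0 y := fun y hy => by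
    rw [sinc_of_ne_zero hy.ne', slope_def_field, sin_zero, sub_zero, sub_zero]
  intro x hx y hy hxy
  rcases hx.1.eq_or_lt with rfl | hx0
  · simpa only [sinc_zero] using sinc_le_one y
  rw [hsinc x hx0, hsinc y (hx0.trans_le hxy)]
  exact hslope ⟨hx, hx0⟩ ⟨hy, hx0.trans_le hxy⟩ hxy

theorem sinc_nonneg_of_mem_Icc {x : ℝ} (hx : x ∈ Icc 0 π) : 0 ≤ sinc x := by
  simpa [sinc_of_ne_zero pi_ne_zero] using sinc_antitoneOn hx ⟨pi_pos.le, le_rfl⟩ hx.2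

theorem hasDerivAt_cos_add_mul_sq_div_two (c x : ℝ) :
    HasDerivAt (fun y => cos y + c * y ^ 2 / 2) (x * (c - sinc x)) x := by
  refine ((hasDerivAt_cos x).fun_add
    (((hasDerivAt_pow 2 x).const_mul c).div_const 2)).congr_deriv ?_
  rw [mul_sub, mul_sinc]
  ring

section
variable {a : ℝ} (ha₀ : 0 ≤ a) (haπ : a ≤ π)
include ha₀ haπ

theorem antitoneOn_cos_add_sinc_mul_sq_div_two :
    AntitoneOn (fun y => cos y + sinc a * y ^ 2 / 2) (Icc 0 a) := by
  refine antitoneOn_of_hasDerivWithinAt_nonpos (convex_Icc 0 a) (by fun_prop)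
    (fun x _ => (hasDerivAt_cos_add_mul_sq_div_two _ x).hasDerivWithinAt) fun x hx => ?_
  rw [interior_Icc] at hx
  have : sinc a ≤ sinc x :=
    sinc_antitoneOn ⟨hx.1.le, hx.2.le.trans haπ⟩ ⟨ha₀, haπ⟩ hx.2.le
  exact mul_nonpos_of_nonneg_of_nonpos hx.1.le (by linarith)

theorem monotoneOn_cos_add_sinc_mul_sq_div_two :
    MonotoneOn (fun y => cos y + sinc a * y ^ 2 / 2) (Icc a π) := by
  refine monotoneOn_of_hasDerivWithinAt_nonneg (convex_Icc a π) (by fun_prop)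
    (fun x _ => (hasDerivAt_cos_add_mul_sq_div_two _ x).hasDerivWithinAt) fun x hx => ?_
  rw [interior_Icc] at hx
  have : sinc x ≤ sinc a :=
    sinc_antitoneOn ⟨ha₀, haπ⟩ ⟨ha₀.trans hx.1.le, hx.2.le⟩ hx.1.le
  exact mul_nonneg (ha₀.trans hx.1.le) (by linarith)

end

theorem cos_add_sinc_mul_sq_div_two_le {a : ℝ} (ha : |a| ≤ π) (x : ℝ) :
    cos a + sinc a * a ^ 2 / 2 ≤ cos x + sinc a * x ^ 2 / 2 := by
  rw [← cos_abs a, ← cos_abs x, ← sinc_abs a, ← sq_abs a, ← sq_abs x]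
  set g := fun y => cos y + sinc |a| * y ^ 2 / 2
  have ha₀ := abs_nonneg a
  have hx₀ := abs_nonneg x
  change g |a| ≤ g |x|
  rcases le_total |x| |a| with hxa | hax
  · exact antitoneOn_cos_add_sinc_mul_sq_div_two ha₀ ha ⟨hx₀, hxa⟩ ⟨ha₀, le_rfl⟩ hxa
  have hmono := monotoneOn_cos_add_sinc_mul_sq_div_two ha₀ ha
  rcases le_total |x| π with hxπ | hπx
  · exact hmono ⟨le_rfl, ha⟩ ⟨hax, hxπ⟩ hax
  calc g |a| ≤ g π := hmono ⟨le_rfl, ha⟩ ⟨ha, le_rfl⟩ ha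
    _ ≤ g |x| := by
      have hc := sinc_nonneg_of_mem_Icc ⟨ha₀, ha⟩
      have hsq : π ^ 2 ≤ |x| ^ 2 := pow_le_pow_left₀ pi_pos.le hπx 2
      simp only [g, cos_pi]
      nlinarith [neg_one_le_cos |x|]

end Real

theorem abs_le_half_of_abs_le_abs_add_of_abs_le_abs_sub {α : Type*} [Field α] [LinearOrder α]
    [IsStrictOrderedRing α] {t p : α} (hp : 0 < p) (h₁ : |t| ≤ |t + p|) (h₂ : |t| ≤ |t - p|) :
    |t| ≤ p / 2 := by
  rw [← sq_le_sq] at h₁ h₂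
  rw [abs_le]
  constructor <;> nlinarith

/-- Cosine surrogate inequality: if `z₀` minimizes `|θ₀ + 2πz|` over `z ∈ ℤ` and
`φ₀ = θ₀ + 2πz₀`, then
`-cos θ ≤ (1/2)·sinc(φ₀)·(θ + 2πz₀)² − cos φ₀ − (1/2)·φ₀·sin φ₀`. -/
theorem cosine_surrogate (θ θ₀ : ℝ) (z₀ : ℤ)
    (hz₀ : ∀ z : ℤ, |θ₀ + 2 * π * (z₀ : ℝ)| ≤ |θ₀ + 2 * π * (z : ℝ)|)
    (φ₀ : ℝ) (hφ₀ : φ₀ = θ₀ + 2 * π * (z₀ : ℝ)) :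
    -Real.cos θ ≤ (1 / 2) * _root_.sinc φ₀ * (θ + 2 * π * (z₀ : ℝ)) ^ 2
      - Real.cos φ₀ - (1 / 2) * φ₀ * Real.sin φ₀ := by
  have hφ₀π : |φ₀| ≤ π := by
    have h₁ : |φ₀| ≤ |φ₀ + 2 * π| := by simpa [hφ₀, mul_add, add_assoc] using hz₀ (z₀ + 1)
    have h₂ : |φ₀| ≤ |φ₀ - 2 * π| := by simpa [hφ₀, mul_sub, add_sub_assoc] using hz₀ (z₀ - 1)
    simpa using abs_le_half_of_abs_le_abs_add_of_abs_le_abs_sub (by positivity) h₁ h₂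
  have hcos : cos θ = cos (θ + 2 * π * z₀) := by
    rw [mul_comm, cos_add_int_mul_two_pi]
  have hmin := cos_add_sinc_mul_sq_div_two_le hφ₀π (θ + 2 * π * z₀)
  have hsq : Real.sinc φ₀ * φ₀ ^ 2 = φ₀ * sin φ₀ := by rw [← mul_sinc]; ring
  rw [sinc_eq_real_sinc, hcos]
  linarith
end

section
/- With the notation of the quadratic surrogate theorem, for every pair p ∈ P the weight ξ_p = Σ_k ω_k² β_k û_{kp} is nonnegative, and consequently the matrix D(q̂) = Σ_{p ∈ P} ξ_p Δ_p Δ_pᵀ is symmetric positive semidefinite. -/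
/-!
Each `û_{kp}` is a nonnegative modulus times `sinc` of a phase that `z_{kp}` has wrapped into
`[-π, π]`, where `sinc ≥ 0`; each `β_k` is a quotient of real powers of the nonnegative numbers
`a_kᴴ V_k a_k`. Hence every `ξ_p` is nonnegative, and `D` is a nonnegative combination of the
positive semidefinite rank-one matrices `Δ_p Δ_pᵀ`.
-/

open Matrix Real ComplexOrder

/-- The steering vector `a(q) = M^{-1/2} (exp(i ω d_1ᵀ q), …, exp(i ω d_Mᵀ q))`. -/
noncomputable def steer (M : ℕ) (d : Fin M → Fin 3 → ℝ) (ω : ℝ) (q : Fin 3 → ℝ) :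
    Fin M → ℂ :=
  fun m => ((Real.sqrt M : ℝ) : ℂ)⁻¹ * Complex.exp (Complex.I * ((ω * (d m ⬝ᵥ q) : ℝ) : ℂ))

/-- The set of distinct pairs `{(m,r) : m < r}`. -/
def pairs (M : ℕ) : Finset (Fin M × Fin M) := Finset.univ.filter fun p => p.1 < p.2

lemma sinc_nonneg_of_abs_le_pi {t : ℝ} (ht : |t| ≤ π) : 0 ≤ _root_.sinc t := by
  have hsinc_abs : _root_.sinc t = Real.sinc |t| := by
    rcases abs_choice t with h | h <;> rw [h]
    · rfl
    · exact (Real.sinc_neg t).symm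
  rw [hsinc_abs, Real.sinc_apply]
  split_ifs
  · exact zero_le_one
  · exact div_nonneg (sin_nonneg_of_nonneg_of_le_pi (abs_nonneg t) ht) (abs_nonneg t)

lemma abs_add_two_pi_mul_le_pi {c : ℝ} {z : ℤ}
    (hz : ∀ z' : ℤ, |c + 2 * π * z| ≤ |c + 2 * π * z'|) : |c + 2 * π * z| ≤ π := by
  set x := c / (2 * π)
  have hround : c + 2 * π * ((-round x : ℤ) : ℝ) = 2 * π * (x - round x) := by
    simp only [x, Int.cast_neg]
    field_simp
    ring
  calc |c + 2 * π * z| ≤ |c + 2 * π * ((-round x : ℤ) : ℝ)| := hz _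
    _ = 2 * π * |x - round x| := by rw [hround, abs_mul, abs_of_pos two_pi_pos]
    _ ≤ 2 * π * (1 / 2) := by gcongr; exact abs_sub_round x
    _ = π := by ring

lemma re_star_dotProduct_mulVec_nonneg {n : Type*} [Fintype n] {A : Matrix n n ℂ}
    (hA : A.PosSemidef) (x : n → ℂ) : 0 ≤ (star x ⬝ᵥ A *ᵥ x).re :=
  (Complex.nonneg_iff.mp (hA.dotProduct_mulVec_nonneg x)).1

lemma posSemidef_sum_smul_vecMulVec_self {ι n : Type*} [Fintype n] (s : Finset ι)
    (c : ι → ℝ) (v : ι → n → ℝ) (hc : ∀ i ∈ s, 0 ≤ c i) :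
    (∑ i ∈ s, c i • vecMulVec (v i) (v i)).PosSemidef :=
  posSemidef_sum s fun i hi => (posSemidef_vecMulVec_self_star (v i)).smul (hc i hi)

theorem xi_nonneg_and_D_posSemidef_general (M K : ℕ)
    (d : Fin M → Fin 3 → ℝ)
    (ω : Fin K → ℝ)
    (V : Fin K → Matrix (Fin M) (Fin M) ℂ) (hV : ∀ k, (V k).PosDef)
    (s : ℝ)
    (qhat : Fin 3 → ℝ)
    (z : Fin K → Fin M × Fin M → ℤ)
    (hz : ∀ k, ∀ p ∈ pairs M, ∀ z' : ℤ,
      |Complex.arg (V k p.1 p.2) + π - ω k * ((d p.1 - d p.2) ⬝ᵥ qhat) + 2 * π * (z k p : ℝ)| ≤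
      |Complex.arg (V k p.1 p.2) + π - ω k * ((d p.1 - d p.2) ⬝ᵥ qhat) + 2 * π * (z' : ℝ)|)
    (ψh uh : Fin K → Fin M × Fin M → ℝ)
    (hψh : ∀ k p, ψh k p = Complex.arg (V k p.1 p.2) + π + 2 * π * (z k p : ℝ))
    (huh : ∀ k p, uh k p = (‖V k p.1 p.2‖ / (M : ℝ)) *
      _root_.sinc (ψh k p - ω k * ((d p.1 - d p.2) ⬝ᵥ qhat)))
    (β : Fin K → ℝ)
    (hβ : ∀ k, β k =
      (1 / (K : ℝ)) *
        (star (steer M d (ω k) qhat) ⬝ᵥ (V k).mulVec (steer M d (ω k) qhat)).re ^ (s - 1) /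
      ((1 / (K : ℝ)) *
        ∑ k', (star (steer M d (ω k') qhat) ⬝ᵥ
          (V k').mulVec (steer M d (ω k') qhat)).re ^ s) ^ (1 - 1 / s))
    (ξ : Fin M × Fin M → ℝ)
    (hξ : ∀ p, ξ p = ∑ k, ω k ^ 2 * β k * uh k p)
    (D : Matrix (Fin 3) (Fin 3) ℝ)
    (hD : D = ∑ p ∈ pairs M, ξ p • vecMulVec (d p.1 - d p.2) (d p.1 - d p.2)) :
    (∀ p ∈ pairs M, 0 ≤ ξ p) ∧ D.PosSemidef := by
  have hquad k := re_star_dotProduct_mulVec_nonneg (hV k).posSemidef (steer M d (ω k) qhat)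
  have hβ_nonneg k : 0 ≤ β k := by
    rw [hβ k]
    have hsum := Finset.sum_nonneg fun k' (_ : k' ∈ Finset.univ) => rpow_nonneg (hquad k') s
    exact div_nonneg (mul_nonneg (by positivity) (rpow_nonneg (hquad k) _))
      (rpow_nonneg (mul_nonneg (by positivity) hsum) _)
  have huh_nonneg : ∀ k, ∀ p ∈ pairs M, 0 ≤ uh k p := by
    intro k p hp
    rw [huh, hψh]
    refine mul_nonneg (by positivity) (sinc_nonneg_of_abs_le_pi ?_)
    have hphase : Complex.arg (V k p.1 p.2) + π + 2 * π * (z k p : ℝ) -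
        ω k * ((d p.1 - d p.2) ⬝ᵥ qhat) = Complex.arg (V k p.1 p.2) + π -
        ω k * ((d p.1 - d p.2) ⬝ᵥ qhat) + 2 * π * (z k p : ℝ) := by ring
    rw [hphase]
    exact abs_add_two_pi_mul_le_pi (hz k p hp)
  have hξ_nonneg : ∀ p ∈ pairs M, 0 ≤ ξ p := fun p hp => by
    rw [hξ]
    exact Finset.sum_nonneg fun k _ =>
      mul_nonneg (mul_nonneg (sq_nonneg _) (hβ_nonneg k)) (huh_nonneg k p hp)
  exact ⟨hξ_nonneg, hD ▸ posSemidef_sum_smul_vecMulVec_self _ _ _ hξ_nonneg⟩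

/-- With the notation of the quadratic surrogate theorem, every weight `ξ_p` is nonnegative,
and consequently `D(q̂) = Σ_p ξ_p Δ_p Δ_pᵀ` is symmetric positive semidefinite. -/
theorem xi_nonneg_and_D_posSemidef (M K : ℕ) (hM : 2 ≤ M) (hK : 1 ≤ K)
    (d : Fin M → Fin 3 → ℝ)
    (ω : Fin K → ℝ) (hω : ∀ k, 0 < ω k)
    (V : Fin K → Matrix (Fin M) (Fin M) ℂ) (hV : ∀ k, (V k).PosDef)
    (s : ℝ) (hs : s < 1) (hs0 : s ≠ 0)
    (qhat : Fin 3 → ℝ) (hqhat : Real.sqrt (∑ i, qhat i ^ 2) = 1)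
    (z : Fin K → Fin M × Fin M → ℤ)
    (hz : ∀ k, ∀ p ∈ pairs M, ∀ z' : ℤ,
      |Complex.arg (V k p.1 p.2) + π - ω k * ((d p.1 - d p.2) ⬝ᵥ qhat) + 2 * π * (z k p : ℝ)| ≤
      |Complex.arg (V k p.1 p.2) + π - ω k * ((d p.1 - d p.2) ⬝ᵥ qhat) + 2 * π * (z' : ℝ)|)
    (ψh uh : Fin K → Fin M × Fin M → ℝ)
    (hψh : ∀ k p, ψh k p = Complex.arg (V k p.1 p.2) + π + 2 * π * (z k p : ℝ))
    (huh : ∀ k p, uh k p = (‖V k p.1 p.2‖ / (M : ℝ)) *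
      _root_.sinc (ψh k p - ω k * ((d p.1 - d p.2) ⬝ᵥ qhat)))
    (β : Fin K → ℝ)
    (hβ : ∀ k, β k =
      (1 / (K : ℝ)) *
        (star (steer M d (ω k) qhat) ⬝ᵥ (V k).mulVec (steer M d (ω k) qhat)).re ^ (s - 1) /
      ((1 / (K : ℝ)) *
        ∑ k', (star (steer M d (ω k') qhat) ⬝ᵥ
          (V k').mulVec (steer M d (ω k') qhat)).re ^ s) ^ (1 - 1 / s))
    (ξ : Fin M × Fin M → ℝ)
    (hξ : ∀ p, ξ p = ∑ k, ω k ^ 2 * β k * uh k p)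
    (D : Matrix (Fin 3) (Fin 3) ℝ)
    (hD : D = ∑ p ∈ pairs M, ξ p • vecMulVec (d p.1 - d p.2) (d p.1 - d p.2)) :
    (∀ p ∈ pairs M, 0 ≤ ξ p) ∧ D.PosSemidef :=
  xi_nonneg_and_D_posSemidef_general M K d ω V hV s qhat z hz ψh uh hψh huh β hβ ξ hξ D hD
end

section
/- (Generalized trust-region subproblem optimality.) Let D ∈ ℝ^{n×n} be symmetric, v ∈ ℝⁿ, and μ₀ ∈ ℝ be such that D + μ₀·I is positive semidefinite. Suppose q* ∈ ℝⁿ satisfies (D + μ₀·I) q* = v and ‖q*‖ = 1. Then q* is a global minimizer of q ↦ qᵀ D q − 2 vᵀ q over the unit sphere, i.e., for every q ∈ ℝⁿ with ‖q‖ = 1, q*ᵀ D q* − 2 vᵀ q* ≤ qᵀ D q − 2 vᵀ q. -/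
open Matrix

/-- The Euclidean norm on `ℝⁿ`. -/
noncomputable def euclNorm {n : ℕ} (x : Fin n → ℝ) : ℝ := Real.sqrt (∑ i, x i ^ 2)

/-- Generalized trust-region subproblem optimality: if `D + μ₀ I` is positive semidefinite,
`(D + μ₀ I) q* = v`, and `‖q*‖ = 1`, then `q*` globally minimizes `qᵀ D q − 2 vᵀ q` over the
unit sphere. -/
theorem gtrs_optimality (n : ℕ) (D : Matrix (Fin n) (Fin n) ℝ) (hD : D.IsSymm)
    (v : Fin n → ℝ) (μ₀ : ℝ)
    (hpsd : ∀ x : Fin n → ℝ, 0 ≤ x ⬝ᵥ (D + μ₀ • (1 : Matrix (Fin n) (Fin n) ℝ)).mulVec x)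
    (qstar : Fin n → ℝ)
    (heq : (D + μ₀ • (1 : Matrix (Fin n) (Fin n) ℝ)).mulVec qstar = v)
    (hnorm : euclNorm qstar = 1) :
    ∀ q : Fin n → ℝ, euclNorm q = 1 →
      qstar ⬝ᵥ D.mulVec qstar - 2 * (v ⬝ᵥ qstar) ≤ q ⬝ᵥ D.mulVec q - 2 * (v ⬝ᵥ q) := by
  intro q hq
  set M := D + μ₀ • (1 : Matrix (Fin n) (Fin n) ℝ) with hM
  have hMsymm : Mᵀ = M := by
    rw [hM, Matrix.transpose_add, Matrix.transpose_smul, Matrix.transpose_one, hD]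
  have hx2 : ∀ x : Fin n → ℝ, euclNorm x = 1 → x ⬝ᵥ x = 1 := by
    intro x hx
    have h0 : 0 ≤ ∑ i, x i ^ 2 := Finset.sum_nonneg fun i _ => sq_nonneg _
    have h1 : ∑ i, x i ^ 2 = 1 := by
      have := congrArg (· ^ 2) hx
      simpa [euclNorm, Real.sq_sqrt h0] using this
    simpa [dotProduct, pow_two] using h1
  have hq1 := hx2 q hq
  have hqs1 := hx2 qstar hnorm
  have e1 : q ⬝ᵥ M.mulVec q = q ⬝ᵥ D.mulVec q + μ₀ := by
    simp [hM, Matrix.add_mulVec, dotProduct_add, Matrix.smul_mulVec,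
      Matrix.one_mulVec, dotProduct_smul, hq1, smul_eq_mul]
  have e2 : qstar ⬝ᵥ M.mulVec qstar = qstar ⬝ᵥ D.mulVec qstar + μ₀ := by
    simp [hM, Matrix.add_mulVec, dotProduct_add, Matrix.smul_mulVec,
      Matrix.one_mulVec, dotProduct_smul, hqs1, smul_eq_mul]
  have e3 : q ⬝ᵥ M.mulVec qstar = q ⬝ᵥ v := by rw [heq]
  have e4 : qstar ⬝ᵥ M.mulVec q = v ⬝ᵥ q := by
    rw [Matrix.dotProduct_mulVec, ← Matrix.mulVec_transpose, hMsymm, heq]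
  have e5 : v ⬝ᵥ qstar = q ⬝ᵥ v → True := fun _ => trivial
  have hc1 : q ⬝ᵥ v = v ⬝ᵥ q := dotProduct_comm _ _
  have hc2 : q ⬝ᵥ v = v ⬝ᵥ qstar → True := fun _ => trivial
  have hvqs : v ⬝ᵥ qstar = qstar ⬝ᵥ M.mulVec qstar := by
    rw [heq.symm, dotProduct_comm]
  have hkey := hpsd (q - qstar)
  have hexp : (q - qstar) ⬝ᵥ M.mulVec (q - qstar) =
      q ⬝ᵥ M.mulVec q - q ⬝ᵥ M.mulVec qstar - qstar ⬝ᵥ M.mulVec q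
        + qstar ⬝ᵥ M.mulVec qstar := by
    simp only [Matrix.mulVec_sub, dotProduct_sub, sub_dotProduct]
    ring
  rw [hexp, e1, e2, e3, e4] at hkey
  linarith [hkey, hvqs, hc1, e2]
end

section
/- Let D ∈ ℝ^{n×n} be symmetric with smallest eigenvalue λ_min, and let v ∈ ℝⁿ with v ≠ 0. Then the function μ ↦ ‖(D + μ·I)^{−1} v‖² is strictly decreasing on the interval (−λ_min, ∞); in particular, there is at most one μ₀ > −λ_min with ‖(D + μ₀·I)^{−1} v‖ = 1. -/
open Matrix

theorem euclNorm_sq {n : ℕ} (x : Fin n → ℝ) : euclNorm x ^ 2 = x ⬝ᵥ x := by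
  rw [euclNorm, Real.sq_sqrt (by positivity)]
  simp only [dotProduct, sq]

theorem euclNorm_smul {n : ℕ} (c : ℝ) (x : Fin n → ℝ) : euclNorm (c • x) = |c| * euclNorm x := by
  simp only [euclNorm, Pi.smul_apply, smul_eq_mul, mul_pow, ← Finset.mul_sum]
  rw [Real.sqrt_mul (sq_nonneg c), Real.sqrt_sq_eq_abs]

theorem euclNorm_pos {n : ℕ} {x : Fin n → ℝ} (hx : x ≠ 0) : 0 < euclNorm x := by
  refine (Real.sqrt_nonneg _).lt_of_ne' fun h0 => hx (dotProduct_self_eq_zero.1 ?_)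
  rw [← euclNorm_sq, euclNorm, h0, zero_pow two_ne_zero]

theorem mul_dotProduct_self_le_of_unit_sphere {n : ℕ} (D : Matrix (Fin n) (Fin n) ℝ) {c : ℝ}
    (h : ∀ x : Fin n → ℝ, euclNorm x = 1 → c ≤ x ⬝ᵥ D *ᵥ x) (x : Fin n → ℝ) :
    c * (x ⬝ᵥ x) ≤ x ⬝ᵥ D *ᵥ x := by
  rcases eq_or_ne x 0 with rfl | hx
  · simp
  have hr := euclNorm_pos hx
  have hunit : euclNorm ((euclNorm x)⁻¹ • x) = 1 := by
    rw [euclNorm_smul, abs_inv, abs_of_pos hr, inv_mul_cancel₀ hr.ne']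
  have hc := h _ hunit
  rwa [mulVec_smul, dotProduct_smul, smul_dotProduct, smul_eq_mul, smul_eq_mul, ← mul_assoc,
    ← sq, inv_pow, ← div_eq_inv_mul, le_div_iff₀ (by positivity), euclNorm_sq] at hc

theorem Matrix.IsSymm.posSemidef_sub_smul_one {ι : Type*} [Fintype ι] [DecidableEq ι]
    {D : Matrix ι ι ℝ} (hD : D.IsSymm) {c : ℝ}
    (h : ∀ x : ι → ℝ, c * (x ⬝ᵥ x) ≤ x ⬝ᵥ D *ᵥ x) : (D - c • 1).PosSemidef := by
  refine PosSemidef.of_dotProduct_mulVec_nonneg ?_ fun x => ?_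
  · exact isHermitian_iff_isSymm.2 (hD.sub (isSymm_one.smul c))
  · rw [star_trivial, sub_mulVec, smul_mulVec, one_mulVec, dotProduct_sub, dotProduct_smul,
      smul_eq_mul, sub_nonneg]
    exact h x

theorem Matrix.PosDef.dotProduct_self_inv_add_smul_one_mulVec_lt {ι : Type*} [Fintype ι]
    [DecidableEq ι] {A : Matrix ι ι ℝ} (hA : A.PosDef) {δ : ℝ} (hδ : 0 < δ) {v : ι → ℝ} (hv : v ≠ 0) :
    ((A + δ • 1)⁻¹ *ᵥ v) ⬝ᵥ ((A + δ • 1)⁻¹ *ᵥ v) < (A⁻¹ *ᵥ v) ⬝ᵥ (A⁻¹ *ᵥ v) := by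
  have hB : (A + δ • 1).PosDef := hA.add (PosDef.one.smul hδ)
  set x := (A + δ • 1)⁻¹ *ᵥ v
  set y := A⁻¹ *ᵥ x
  have hBx : (A + δ • 1) *ᵥ x = v := by
    rw [mulVec_mulVec, mul_nonsing_inv _ ((isUnit_iff_isUnit_det _).1 hB.isUnit), one_mulVec]
  have hx : x ≠ 0 := fun h => hv (by rw [← hBx, h, mulVec_zero])
  have hresolvent : A⁻¹ *ᵥ v = x + δ • y := by
    rw [← hBx, add_mulVec, smul_mulVec, one_mulVec, mulVec_add, mulVec_mulVec,
      nonsing_inv_mul _ ((isUnit_iff_isUnit_det _).1 hA.isUnit), one_mulVec, mulVec_smul]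
  have hxy : 0 < x ⬝ᵥ y := by simpa using hA.inv.dotProduct_mulVec_pos hx
  calc x ⬝ᵥ x < x ⬝ᵥ x + 2 * δ * (x ⬝ᵥ y) + δ ^ 2 * (y ⬝ᵥ y) := by
        have hyy : 0 ≤ y ⬝ᵥ y := by simpa using dotProduct_star_self_nonneg y
        linarith [mul_pos (mul_pos two_pos hδ) hxy, mul_nonneg (sq_nonneg δ) hyy]
    _ = (A⁻¹ *ᵥ v) ⬝ᵥ (A⁻¹ *ᵥ v) := by
        rw [hresolvent]
        simp only [dotProduct_add, add_dotProduct, dotProduct_smul, smul_dotProduct, smul_eq_mul,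
          dotProduct_comm y x]
        ring

theorem inv_shift_norm_strictAnti_general (n : ℕ) (D : Matrix (Fin n) (Fin n) ℝ) (hD : D.IsSymm)
    (v : Fin n → ℝ) (hv : v ≠ 0) (lammin : ℝ)
    (hlo : ∀ x : Fin n → ℝ, euclNorm x = 1 → lammin ≤ x ⬝ᵥ D.mulVec x) :
    StrictAntiOn
      (fun μ : ℝ =>
        (euclNorm (((D + μ • (1 : Matrix (Fin n) (Fin n) ℝ))⁻¹).mulVec v)) ^ 2)
      (Set.Ioi (-lammin)) ∧
    ∀ μ₁ ∈ Set.Ioi (-lammin), ∀ μ₂ ∈ Set.Ioi (-lammin),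
      euclNorm (((D + μ₁ • (1 : Matrix (Fin n) (Fin n) ℝ))⁻¹).mulVec v) = 1 →
      euclNorm (((D + μ₂ • (1 : Matrix (Fin n) (Fin n) ℝ))⁻¹).mulVec v) = 1 →
      μ₁ = μ₂ := by
  have hpsd : (D - lammin • 1).PosSemidef :=
    hD.posSemidef_sub_smul_one (mul_dotProduct_self_le_of_unit_sphere D hlo)
  have hpd : ∀ μ ∈ Set.Ioi (-lammin), (D + μ • 1).PosDef := fun μ hμ => by
    rw [show D + μ • 1 = (D - lammin • 1) + (μ + lammin) • 1 by module]
    exact PosDef.posSemidef_add hpsd (PosDef.one.smul (neg_lt_iff_pos_add.1 hμ))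
  have hanti : StrictAntiOn
      (fun μ : ℝ => (euclNorm (((D + μ • (1 : Matrix (Fin n) (Fin n) ℝ))⁻¹).mulVec v)) ^ 2)
      (Set.Ioi (-lammin)) := by
    intro μ₁ hμ₁ μ₂ _ hlt
    beta_reduce
    rw [euclNorm_sq, euclNorm_sq, show D + μ₂ • 1 = (D + μ₁ • 1) + (μ₂ - μ₁) • 1 by module]
    exact (hpd μ₁ hμ₁).dotProduct_self_inv_add_smul_one_mulVec_lt (sub_pos.2 hlt) hv
  exact ⟨hanti, fun μ₁ h₁ μ₂ h₂ e₁ e₂ => hanti.injOn h₁ h₂ (by simp only [e₁, e₂])⟩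

/-- Let `D` be symmetric with smallest eigenvalue `λ_min` (characterized as the minimum of the
Rayleigh quotient over the unit sphere, attained), and `v ≠ 0`. Then
`μ ↦ ‖(D + μI)⁻¹ v‖²` is strictly decreasing on `(−λ_min, ∞)`; in particular there is at most
one `μ₀ > −λ_min` with `‖(D + μ₀ I)⁻¹ v‖ = 1`. -/
theorem inv_shift_norm_strictAnti (n : ℕ) (D : Matrix (Fin n) (Fin n) ℝ) (hD : D.IsSymm)
    (v : Fin n → ℝ) (hv : v ≠ 0) (lammin : ℝ)
    (hlo : ∀ x : Fin n → ℝ, euclNorm x = 1 → lammin ≤ x ⬝ᵥ D.mulVec x)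
    (hach : ∃ x : Fin n → ℝ, euclNorm x = 1 ∧ x ⬝ᵥ D.mulVec x = lammin) :
    StrictAntiOn
      (fun μ : ℝ =>
        (euclNorm (((D + μ • (1 : Matrix (Fin n) (Fin n) ℝ))⁻¹).mulVec v)) ^ 2)
      (Set.Ioi (-lammin)) ∧
    ∀ μ₁ ∈ Set.Ioi (-lammin), ∀ μ₂ ∈ Set.Ioi (-lammin),
      euclNorm (((D + μ₁ • (1 : Matrix (Fin n) (Fin n) ℝ))⁻¹).mulVec v) = 1 →
      euclNorm (((D + μ₂ • (1 : Matrix (Fin n) (Fin n) ℝ))⁻¹).mulVec v) = 1 →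
      μ₁ = μ₂ :=
  inv_shift_norm_strictAnti_general n D hD v hv lammin hlo
end
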